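/- For any integer k ≥ 1 and any nonnegative integer n, we have n·↑^{k+1} < ↑^k, where n·G is the disjunctive sum of n copies of G. -/

import Mathlib

namespace SetTheory

universe u

/-- Pre-games (removed from Mathlib; old definition restored). -/
inductive PGame : Type (u + 1)
  | mk : ∀ α β : Type u, (α → PGame) → (β → PGame) → PGame

namespace PGame

def LeftMoves : PGame → Type u
  | mk l _ _ _ => l

def RightMoves : PGame → Type u
  | mk _ r _ _ => r

def moveLeft : ∀ g : PGame, LeftMoves g → PGame
  | mk _l _ L _ => L

def moveRight : ∀ g : PGame, RightMoves g → PGame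
  | mk _ _r _ R => R

instance : Zero PGame := ⟨⟨PEmpty, PEmpty, PEmpty.elim, PEmpty.elim⟩⟩

def star : PGame.{u} := ⟨PUnit, PUnit, fun _ => 0, fun _ => 0⟩

def neg : PGame → PGame
  | ⟨l, r, L, R⟩ => ⟨r, l, fun i => neg (R i), fun i => neg (L i)⟩

instance : Neg PGame := ⟨neg⟩

def addAux (xl xr : Type u) (fL : xl → PGame.{u} → PGame.{u}) (fR : xr → PGame.{u} → PGame.{u})
    (xR : xr → PGame.{u}) (xL : xl → PGame.{u}) : PGame.{u} → PGame.{u}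
  | mk yl yr yL yR =>
    mk (xl ⊕ yl) (xr ⊕ yr)
      (Sum.elim (fun i => fL i (mk yl yr yL yR)) (fun j => addAux xl xr fL fR xR xL (yL j)))
      (Sum.elim (fun i => fR i (mk yl yr yL yR)) (fun j => addAux xl xr fL fR xR xL (yR j)))

def add : PGame.{u} → PGame.{u} → PGame.{u}
  | mk xl xr xL xR => addAux xl xr (fun i => add (xL i)) (fun i => add (xR i)) xR xL

instance : Add PGame.{u} := ⟨add⟩

instance : Sub PGame := ⟨fun x y => x + -y⟩

noncomputable def leLF (x : PGame.{u}) : PGame.{u} → Prop × Prop :=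
  PGame.rec (motive := fun _ => PGame.{u} → Prop × Prop)
    (fun _ _ _ _ IHxl IHxr y =>
      PGame.rec (motive := fun _ => Prop × Prop)
        (fun yl yr yL yR IHyl IHyr =>
          ((∀ i, (IHxl i (mk yl yr yL yR)).2) ∧ ∀ j, (IHyr j).2,
           (∃ i, (IHyl i).1) ∨ ∃ j, (IHxr j (mk yl yr yL yR)).1)) y) x

noncomputable instance : LE PGame := ⟨fun x y => (leLF x y).1⟩

def LF (x y : PGame) : Prop := (leLF x y).2

noncomputable instance : LT PGame := ⟨fun x y => x ≤ y ∧ LF x y⟩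

theorem le_def {x y : PGame} :
    x ≤ y ↔ (∀ i, LF (x.moveLeft i) y) ∧ ∀ j, LF x (y.moveRight j) := by
  cases x; cases y; exact Iff.rfl

theorem lf_def {x y : PGame} :
    LF x y ↔ (∃ i, x ≤ y.moveLeft i) ∨ ∃ j, x.moveRight j ≤ y := by
  cases x; cases y; exact Iff.rfl

theorem iff_not_of_iff_not {a b : Prop} (h : b ↔ ¬ a) : a ↔ ¬ b :=
  ⟨fun ha hb => h.1 hb ha, fun hnb => Classical.byContradiction fun hna => hnb (h.2 hna)⟩

theorem lf_iff_not_le (x y : PGame) : LF x y ↔ ¬ y ≤ x := by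
  suffices h : ∀ x y : PGame, (LF x y ↔ ¬ y ≤ x) ∧ (LF y x ↔ ¬ x ≤ y) from (h x y).1
  intro x
  induction x with
  | mk xl xr xL xR IHxl IHxr =>
  intro y
  induction y with
  | mk yl yr yL yR IHyl IHyr =>
  constructor
  · rw [lf_def, le_def, not_and_or, not_forall, not_forall]
    exact or_congr (exists_congr fun i => iff_not_of_iff_not (IHyl i).2)
      (exists_congr fun j => iff_not_of_iff_not (IHxr j _).2)
  · rw [lf_def, le_def, not_and_or, not_forall, not_forall]
    exact or_congr (exists_congr fun i => iff_not_of_iff_not (IHxl i _).1)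
      (exists_congr fun j => iff_not_of_iff_not (IHyr j).1)

theorem le_def' {x y : PGame} :
    x ≤ y ↔ (∀ i, ¬ y ≤ x.moveLeft i) ∧ ∀ j, ¬ y.moveRight j ≤ x := by
  rw [le_def]; simp only [lf_iff_not_le]

theorem le_refl' (x : PGame) : x ≤ x := by
  induction x with
  | mk xl xr xL xR IHxl IHxr =>
  rw [le_def]
  exact ⟨fun i => lf_def.2 (Or.inl ⟨i, IHxl i⟩), fun j => lf_def.2 (Or.inr ⟨j, IHxr j⟩)⟩

theorem le_trans_aux : ∀ x y z : PGame,
    (x ≤ y → y ≤ z → x ≤ z) ∧ (y ≤ z → z ≤ x → y ≤ x) ∧ (z ≤ x → x ≤ y → z ≤ y) := by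
  intro x
  induction x with
  | mk xl xr xL xR IHxl IHxr =>
  intro y
  induction y with
  | mk yl yr yL yR IHyl IHyr =>
  intro z
  induction z with
  | mk zl zr zL zR IHzl IHzr =>
  refine ⟨fun hxy hyz => ?_, fun hyz hzx => ?_, fun hzx hxy => ?_⟩
  · have hxy' := le_def'.1 hxy; have hyz' := le_def'.1 hyz; rw [le_def']
    exact ⟨fun i h => hxy'.1 i ((IHxl i _ _).2.1 hyz h), fun k h => hyz'.2 k ((IHzr k).2.2 h hxy)⟩
  · have hzx' := le_def'.1 hzx; have hyz' := le_def'.1 hyz; rw [le_def']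
    exact ⟨fun i h => hyz'.1 i ((IHyl i _).2.2 hzx h), fun j h => hzx'.2 j ((IHxr j _ _).1 h hyz)⟩
  · have hzx' := le_def'.1 hzx; have hxy' := le_def'.1 hxy; rw [le_def']
    exact ⟨fun i h => hzx'.1 i ((IHzl i).1 hxy h), fun j h => hxy'.2 j ((IHyr j _).2.1 h hzx)⟩

theorem le_trans' {x y z : PGame} (h₁ : x ≤ y) (h₂ : y ≤ z) : x ≤ z :=
  (le_trans_aux x y z).1 h₁ h₂

def Equiv (x y : PGame) : Prop := x ≤ y ∧ y ≤ x

instance setoid : Setoid PGame :=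
  ⟨Equiv, ⟨fun x => ⟨le_refl' x, le_refl' x⟩, fun h => ⟨h.2, h.1⟩,
    fun h₁ h₂ => ⟨le_trans' h₁.1 h₂.1, le_trans' h₂.2 h₁.2⟩⟩⟩

theorem add_le_add_right_aux : ∀ x y z : PGame,
    (x ≤ y → x + z ≤ y + z) ∧ (LF x y → LF (x + z) (y + z)) := by
  intro x
  induction x with
  | mk xl xr xL xR IHxl IHxr =>
  intro y
  induction y with
  | mk yl yr yL yR IHyl IHyr =>
  intro z
  induction z with
  | mk zl zr zL zR IHzl IHzr =>
  constructor
  · intro hxy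
    have hxy' := le_def.1 hxy
    rw [le_def]
    refine ⟨?_, ?_⟩
    · rintro (i | k)
      · exact (IHxl i _ _).2 (hxy'.1 i)
      · exact lf_def.2 (Or.inl ⟨Sum.inr k, (IHzl k).1 hxy⟩)
    · rintro (j | k)
      · exact (IHyr j _).2 (hxy'.2 j)
      · exact lf_def.2 (Or.inr ⟨Sum.inr k, (IHzr k).1 hxy⟩)
  · intro hxy
    rcases lf_def.1 hxy with ⟨i, hi⟩ | ⟨j, hj⟩
    · exact lf_def.2 (Or.inl ⟨Sum.inl i, (IHyl i _).1 hi⟩)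
    · exact lf_def.2 (Or.inr ⟨Sum.inl j, (IHxr j _ _).1 hj⟩)

theorem add_comm_le : ∀ x y : PGame, x + y ≤ y + x := by
  intro x
  induction x with
  | mk xl xr xL xR IHxl IHxr =>
  intro y
  induction y with
  | mk yl yr yL yR IHyl IHyr =>
  rw [le_def]
  refine ⟨?_, ?_⟩
  · rintro (i | k)
    · exact lf_def.2 (Or.inl ⟨Sum.inr i, IHxl i _⟩)
    · exact lf_def.2 (Or.inl ⟨Sum.inl k, IHyl k⟩)
  · rintro (k | j)
    · exact lf_def.2 (Or.inr ⟨Sum.inr k, IHyr k⟩)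
    · exact lf_def.2 (Or.inr ⟨Sum.inl j, IHxr j _⟩)

theorem add_le_add' {x x' y y' : PGame} (hx : x ≤ x') (hy : y ≤ y') : x + y ≤ x' + y' :=
  le_trans' ((add_le_add_right_aux _ _ _).1 hx)
    (le_trans' (add_comm_le _ _) (le_trans' ((add_le_add_right_aux _ _ _).1 hy) (add_comm_le _ _)))

theorem lt_congr' {x₁ y₁ x₂ y₂ : PGame} (hx : x₁ ≈ x₂) (hy : y₁ ≈ y₂) : (x₁ < y₁) = (x₂ < y₂) := by
  apply propext
  change (x₁ ≤ y₁ ∧ LF x₁ y₁) ↔ (x₂ ≤ y₂ ∧ LF x₂ y₂)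
  rw [lf_iff_not_le, lf_iff_not_le]
  exact ⟨fun h => ⟨le_trans' hx.2 (le_trans' h.1 hy.1), fun h' => h.2 (le_trans' hy.1 (le_trans' h' hx.2))⟩,
    fun h => ⟨le_trans' hx.1 (le_trans' h.1 hy.2), fun h' => h.2 (le_trans' hy.2 (le_trans' h' hx.1))⟩⟩

end PGame

/-- Games: pre-games up to equivalence (removed from Mathlib; old definition restored). -/
abbrev Game := Quotient PGame.setoid

namespace Game

instance : Zero Game := ⟨⟦0⟧⟩

instance : Add Game :=
  ⟨Quotient.map₂ (· + ·) (fun _ _ hx _ _ hy => ⟨PGame.add_le_add' hx.1 hy.1, PGame.add_le_add' hx.2 hy.2⟩)⟩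

instance : SMul ℕ Game := ⟨nsmulRec⟩

instance : LT Game := ⟨Quotient.lift₂ (· < ·) (fun _ _ _ _ hx hy => PGame.lt_congr' hx hy)⟩

end Game

end SetTheory


open SetTheory

open scoped PGame

namespace SeqCompound

open Classical in
/-- The sequential compound `G → H` of two pregames. -/
noncomputable def seqc : PGame → PGame → PGame
  | PGame.mk α β L R, H =>
    if Nonempty α then
      if Nonempty β then
        PGame.mk α β (fun a => seqc (L a) H) (fun b => seqc (R b) H)
      else
        PGame.mk α H.RightMoves (fun a => seqc (L a) H) H.moveRight
    else
      if Nonempty β then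
        PGame.mk H.LeftMoves β H.moveLeft (fun b => seqc (R b) H)
      else H

/-- A pregame is dicotic (all-small) if in every subposition,
Left has an option iff Right has an option. -/
def Dicotic : PGame → Prop
  | PGame.mk α β L R =>
    (Nonempty α ↔ Nonempty β) ∧ (∀ a, Dicotic (L a)) ∧ (∀ b, Dicotic (R b))

/-- The canonical nonnegative integer game `{n-1 | }`. -/
def intGame : ℕ → PGame
  | 0 => 0
  | n + 1 => PGame.mk PUnit PEmpty (fun _ => intGame n) PEmpty.elim

/-- `upSum k` is the disjunctive sum `↑¹ + ↑² + ⋯ + ↑ᵏ`. -/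
def upSum : ℕ → PGame
  | 0 => 0
  | k + 1 => upSum k +
      PGame.mk PUnit PUnit (fun _ => 0) (fun _ => PGame.star - upSum k)

/-- `upPow k` is the game `↑^(k+1) = {0 | ∗ - (↑¹ + ⋯ + ↑ᵏ)}`. -/
def upPow (k : ℕ) : PGame :=
  PGame.mk PUnit PUnit (fun _ => 0) (fun _ => PGame.star - upSum k)

/-- Sequential compound of a list of games. -/
noncomputable def seqList : List PGame → PGame
  | [] => 0
  | G :: l => seqc G (seqList l)

end SeqCompound

/-!
Write `V = ↑^(k+1) = {0 | W}` with `W = ∗ - S` and `S = ↑¹ + ⋯ + ↑ᵏ`, so that `↑^(k+2) = {0 | W - V}`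
as a game value. Induct on `n`, with `A = n·↑^(k+2) < V`. Every Left option of `A + ↑^(k+2)` equals
`A`, and Right's move to `W` in `V` is answered by `A + (W - V) ≤ W`; hence `A + ↑^(k+2) ≤ V`.
The inequality is strict because the Right option `A + (W - V)` of `A + ↑^(k+2)` is `≤ V`, i.e.
`A + ∗ ≤ V + (S + V)`: every Right option of `S + V` is at least `∗`, so every Right option of
`V + (S + V)` is at least `V + ∗ > A + ∗`.
-/

namespace SetTheory

namespace PGame

infix:50 " ⧏ " => LF

theorem lf_of_le_moveLeft {x y : PGame} {i : y.LeftMoves} (h : x ≤ y.moveLeft i) : x ⧏ y :=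
  lf_def.2 (Or.inl ⟨i, h⟩)

theorem lf_of_moveRight_le {x y : PGame} {j : x.RightMoves} (h : x.moveRight j ≤ y) : x ⧏ y :=
  lf_def.2 (Or.inr ⟨j, h⟩)

theorem lf_of_lt {x y : PGame} (h : x < y) : x ⧏ y := h.2

def toLeftMovesAdd {x y : PGame} : x.LeftMoves ⊕ y.LeftMoves → (x + y).LeftMoves := by
  cases x; cases y; exact id

def toRightMovesAdd {x y : PGame} : x.RightMoves ⊕ y.RightMoves → (x + y).RightMoves := by
  cases x; cases y; exact id

theorem add_moveLeft_inl {x y : PGame} (i : x.LeftMoves) :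
    (x + y).moveLeft (toLeftMovesAdd (Sum.inl i)) = x.moveLeft i + y := by
  cases x; cases y; rfl

theorem add_moveLeft_inr {x y : PGame} (i : y.LeftMoves) :
    (x + y).moveLeft (toLeftMovesAdd (Sum.inr i)) = x + y.moveLeft i := by
  cases x; cases y; rfl

theorem add_moveRight_inl {x y : PGame} (j : x.RightMoves) :
    (x + y).moveRight (toRightMovesAdd (Sum.inl j)) = x.moveRight j + y := by
  cases x; cases y; rfl

theorem add_moveRight_inr {x y : PGame} (j : y.RightMoves) :
    (x + y).moveRight (toRightMovesAdd (Sum.inr j)) = x + y.moveRight j := by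
  cases x; cases y; rfl

@[elab_as_elim]
theorem leftMoves_add_cases {x y : PGame} {P : (x + y).LeftMoves → Prop} (k : (x + y).LeftMoves)
    (inl : ∀ i, P (toLeftMovesAdd (Sum.inl i))) (inr : ∀ i, P (toLeftMovesAdd (Sum.inr i))) :
    P k := by
  cases x; cases y
  rcases k with i | i
  exacts [inl i, inr i]

@[elab_as_elim]
theorem rightMoves_add_cases {x y : PGame} {P : (x + y).RightMoves → Prop} (k : (x + y).RightMoves)
    (inl : ∀ j, P (toRightMovesAdd (Sum.inl j))) (inr : ∀ j, P (toRightMovesAdd (Sum.inr j))) :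
    P k := by
  cases x; cases y
  rcases k with j | j
  exacts [inl j, inr j]

theorem add_le_iff_forall_lf {x y z : PGame} :
    x + y ≤ z ↔ (∀ i, x.moveLeft i + y ⧏ z) ∧ (∀ i, x + y.moveLeft i ⧏ z) ∧
      ∀ j, x + y ⧏ z.moveRight j := by
  cases x; cases y
  rw [le_def]
  exact (and_congr Sum.forall Iff.rfl).trans and_assoc

theorem add_lf_of_moveRight_add_le {x y z : PGame} (j : x.RightMoves)
    (h : x.moveRight j + y ≤ z) : x + y ⧏ z := by
  cases x; cases y
  exact lf_def.2 (Or.inr ⟨Sum.inl j, h⟩)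

theorem lf_add_of_le_moveLeft_add {x y z : PGame} (i : x.LeftMoves)
    (h : z ≤ x.moveLeft i + y) : z ⧏ x + y := by
  cases x; cases y
  exact lf_def.2 (Or.inl ⟨Sum.inl i, h⟩)

theorem lf_add_of_le_add_moveLeft {x y z : PGame} (i : y.LeftMoves)
    (h : z ≤ x + y.moveLeft i) : z ⧏ x + y := by
  cases x; cases y
  exact lf_def.2 (Or.inl ⟨Sum.inr i, h⟩)

theorem add_lf_of_add_moveRight_le {x y z : PGame} (j : y.RightMoves)
    (h : x + y.moveRight j ≤ z) : x + y ⧏ z := by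
  cases x; cases y
  exact lf_def.2 (Or.inr ⟨Sum.inr j, h⟩)

theorem lf_sub_of_le_sub_moveRight {x y z : PGame} (j : y.RightMoves)
    (h : z ≤ x - y.moveRight j) : z ⧏ x - y := by
  cases x; cases y
  exact lf_def.2 (Or.inl ⟨Sum.inr j, h⟩)

theorem neg_le_neg_iff_and_neg_lf_neg_iff :
    ∀ x y : PGame, (-y ≤ -x ↔ x ≤ y) ∧ (-y ⧏ -x ↔ x ⧏ y) := by
  intro x
  induction x with
  | mk xl xr xL xR IHxl IHxr =>
  intro y
  induction y with
  | mk yl yr yL yR IHyl IHyr =>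
  constructor
  · rw [le_def, le_def]
    exact and_comm.trans (and_congr (forall_congr' fun (i : xl) => (IHxl i _).2)
      (forall_congr' fun (j : yr) => (IHyr j).2))
  · rw [lf_def, lf_def]
    exact or_comm.trans (or_congr (exists_congr fun (j : yl) => (IHyl j).1)
      (exists_congr fun (i : xr) => (IHxr i _).1))

theorem neg_le_neg_iff {x y : PGame} : -y ≤ -x ↔ x ≤ y :=
  (neg_le_neg_iff_and_neg_lf_neg_iff x y).1

theorem zero_add_equiv (x : PGame) : 0 + x ≈ x := by
  induction x with
  | mk xl xr xL xR IHl IHr =>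
  refine ⟨le_def.2 ⟨?_, fun j => lf_of_moveRight_le (j := Sum.inr j) (IHr j).1⟩,
    le_def.2 ⟨fun i => lf_of_le_moveLeft (i := Sum.inr i) (IHl i).2, ?_⟩⟩
  · rintro (i | i)
    · exact PEmpty.elim i
    · exact lf_of_le_moveLeft (IHl i).1
  · rintro (j | j)
    · exact PEmpty.elim j
    · exact lf_of_moveRight_le (IHr j).2

theorem add_neg_equiv_zero (x : PGame) : x + -x ≈ 0 := by
  induction x with
  | mk xl xr xL xR IHl IHr =>
  refine ⟨le_def.2 ⟨?_, fun j => PEmpty.elim j⟩, le_def.2 ⟨fun i => PEmpty.elim i, ?_⟩⟩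
  · rintro (i | j)
    · exact add_lf_of_add_moveRight_le (y := -mk xl xr xL xR) i (IHl i).1
    · exact add_lf_of_moveRight_add_le (x := mk xl xr xL xR) j (IHr j).1
  · rintro (j | i)
    · exact lf_add_of_le_add_moveLeft (y := -mk xl xr xL xR) j (IHr j).2
    · exact lf_add_of_le_moveLeft_add (x := mk xl xr xL xR) i (IHl i).2

theorem add_assoc_le : ∀ x y z : PGame, x + y + z ≤ x + (y + z) := by
  intro x
  induction x with
  | mk xl xr xL xR IHxl IHxr =>
  intro y
  induction y with
  | mk yl yr yL yR IHyl IHyr =>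
  intro z
  induction z with
  | mk zl zr zL zR IHzl IHzr =>
  refine le_def.2 ⟨?_, ?_⟩
  · rintro ((i | j) | k)
    · exact lf_of_le_moveLeft (i := Sum.inl i) (IHxl i _ _)
    · exact lf_of_le_moveLeft (i := Sum.inr (Sum.inl j)) (IHyl j _)
    · exact lf_of_le_moveLeft (i := Sum.inr (Sum.inr k)) (IHzl k)
  · rintro (i | j | k)
    · exact lf_of_moveRight_le (j := Sum.inl (Sum.inl i)) (IHxr i _ _)
    · exact lf_of_moveRight_le (j := Sum.inl (Sum.inr j)) (IHyr j _)
    · exact lf_of_moveRight_le (j := Sum.inr k) (IHzr k)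

theorem add_assoc_equiv (x y z : PGame) : x + y + z ≈ x + (y + z) :=
  ⟨add_assoc_le x y z,
    le_trans' (add_comm_le x (y + z)) (le_trans' (add_assoc_le y z x)
      (le_trans' (add_comm_le y (z + x)) (le_trans' (add_assoc_le z x y) (add_comm_le z (x + y)))))⟩

end PGame

namespace Game

instance : Neg Game :=
  ⟨Quotient.map (fun x => -x) fun _ _ h => ⟨PGame.neg_le_neg_iff.2 h.2, PGame.neg_le_neg_iff.2 h.1⟩⟩

/- Mathlib's `Quotient.instLE` and `Quotient.instPreorder` (the transitive closure of `≤` on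
representatives) also apply to `Game`; the instances below take precedence only because they are
declared later. -/
def le : Game → Game → Prop :=
  Quotient.lift₂ (· ≤ ·) fun _ _ _ _ hx hy => propext
    ⟨fun h => PGame.le_trans' hx.2 (PGame.le_trans' h hy.1),
      fun h => PGame.le_trans' hx.1 (PGame.le_trans' h hy.2)⟩

instance : LE Game := ⟨le⟩

instance : Preorder Game where
  le := le
  toLT := instLT
  le_refl := by
    rintro ⟨x⟩
    exact PGame.le_refl' x
  le_trans := by
    rintro ⟨x⟩ ⟨y⟩ ⟨z⟩
    exact PGame.le_trans'
  lt_iff_le_not_ge := by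
    rintro ⟨x⟩ ⟨y⟩
    exact and_congr Iff.rfl (PGame.lf_iff_not_le x y)

instance : PartialOrder Game where
  le_antisymm := by
    rintro ⟨x⟩ ⟨y⟩ h₁ h₂
    exact Quotient.sound ⟨h₁, h₂⟩

instance : AddCommGroup Game where
  nsmul := nsmulRec
  zsmul := zsmulRec
  add_assoc := by
    rintro ⟨x⟩ ⟨y⟩ ⟨z⟩
    exact Quotient.sound (PGame.add_assoc_equiv x y z)
  zero_add := by
    rintro ⟨x⟩
    exact Quotient.sound (PGame.zero_add_equiv x)
  add_zero := by
    rintro ⟨x⟩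
    exact Quotient.sound (Setoid.trans ⟨PGame.add_comm_le x 0, PGame.add_comm_le 0 x⟩
      (PGame.zero_add_equiv x))
  neg_add_cancel := by
    rintro ⟨x⟩
    exact Quotient.sound (Setoid.trans ⟨PGame.add_comm_le (-x) x, PGame.add_comm_le x (-x)⟩
      (PGame.add_neg_equiv_zero x))
  add_comm := by
    rintro ⟨x⟩ ⟨y⟩
    exact Quotient.sound ⟨PGame.add_comm_le x y, PGame.add_comm_le y x⟩

instance : IsOrderedAddMonoid Game where
  add_le_add_left := by
    rintro ⟨a⟩ ⟨b⟩ h ⟨c⟩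
    exact PGame.add_le_add' (x := a) (x' := b) h (PGame.le_refl' c)

end Game

namespace PGame

@[simp] theorem quot_zero : (⟦0⟧ : Game) = 0 := rfl

@[simp] theorem quot_add (x y : PGame) : (⟦x + y⟧ : Game) = ⟦x⟧ + ⟦y⟧ := rfl

@[simp] theorem quot_sub (x y : PGame) : (⟦x - y⟧ : Game) = ⟦x⟧ - ⟦y⟧ := rfl

theorem le_iff_game_le {x y : PGame} : x ≤ y ↔ (⟦x⟧ : Game) ≤ ⟦y⟧ := Iff.rfl

theorem lt_iff_game_lt {x y : PGame} : x < y ↔ (⟦x⟧ : Game) < ⟦y⟧ := Iff.rfl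

def nCopies : ℕ → PGame → PGame
  | 0, _ => 0
  | n + 1, G => nCopies n G + G

theorem quot_nCopies (n : ℕ) (G : PGame) : (⟦nCopies n G⟧ : Game) = n • ⟦G⟧ := by
  induction n with
  | zero => rfl
  | succ n ih => rw [succ_nsmul, ← ih]; rfl

theorem quot_nCopies_moveLeft {G : PGame} (hG : ∀ i, (⟦G.moveLeft i⟧ : Game) = 0) (n : ℕ)
    (i : (nCopies n G).LeftMoves) :
    (⟦(nCopies n G).moveLeft i⟧ : Game) = ⟦nCopies n G⟧ - ⟦G⟧ := by
  induction n with
  | zero => exact PEmpty.elim i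
  | succ n ih =>
    change (nCopies n G + G).LeftMoves at i
    change (⟦(nCopies n G + G).moveLeft i⟧ : Game) = ⟦nCopies n G + G⟧ - ⟦G⟧
    cases i using leftMoves_add_cases with
    | inl i => rw [add_moveLeft_inl, quot_add, ih, quot_add]; abel
    | inr i => rw [add_moveLeft_inr, quot_add, hG, quot_add]; abel

end PGame

end SetTheory

namespace SeqCompound

open PGame

theorem zero_lf_star_sub_upSum (k : ℕ) : 0 ⧏ star - upSum k := by
  cases k with
  | zero =>
    refine lf_add_of_le_moveLeft_add (x := star) PUnit.unit (le_iff_game_le.2 ?_)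
    change (0 : Game) ≤ ⟦0 - 0⟧
    simp only [quot_sub, quot_zero, sub_self, le_refl]
  | succ k =>
    -- an opaque move rather than `PUnit.unit`, so that `rw [add_moveRight_inr]` can match it
    have j : (upPow k).RightMoves := PUnit.unit
    refine lf_sub_of_le_sub_moveRight (y := upSum k + upPow k) (toRightMovesAdd (Sum.inr j)) ?_
    rw [add_moveRight_inr, le_iff_game_le]
    change (0 : Game) ≤ ⟦star - (upSum k + (star - upSum k))⟧
    simp only [quot_sub, quot_add, add_sub_cancel, sub_self, le_refl]

theorem upPow_pos (k : ℕ) : (0 : Game) < ⟦upPow k⟧ :=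
  ⟨le_def.2 ⟨fun i => PEmpty.elim i, fun _ => zero_lf_star_sub_upSum k⟩,
    lf_of_le_moveLeft (i := PUnit.unit) (le_refl' 0)⟩

theorem upSum_nonneg (k : ℕ) : (0 : Game) ≤ ⟦upSum k⟧ := by
  induction k with
  | zero => exact le_rfl
  | succ k ih => exact add_nonneg ih (upPow_pos k).le

theorem star_le_upSum_moveRight (k : ℕ) (j : (upSum k).RightMoves) :
    (⟦star⟧ : Game) ≤ ⟦(upSum k).moveRight j⟧ := by
  induction k with
  | zero => exact PEmpty.elim j
  | succ k ih =>
    change (upSum k + upPow k).RightMoves at j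
    change (⟦star⟧ : Game) ≤ ⟦(upSum k + upPow k).moveRight j⟧
    cases j using rightMoves_add_cases with
    | inl j =>
      rw [add_moveRight_inl, quot_add]
      exact le_add_of_le_of_nonneg (ih j) (upPow_pos k).le
    | inr j =>
      rw [add_moveRight_inr]
      change (⟦star⟧ : Game) ≤ ⟦upSum k + (star - upSum k)⟧
      simp only [quot_add, quot_sub, add_sub_cancel, le_refl]

theorem add_star_le_upPow_add_upSum {A : PGame} {k : ℕ}
    (hAL : ∀ i, (⟦A.moveLeft i⟧ : Game) ≤ ⟦A⟧) (hA : (⟦A⟧ : Game) < ⟦upPow k⟧) :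
    A + star ≤ upPow k + upSum (k + 1) := by
  have hV_le : (⟦upPow k⟧ : Game) ≤ ⟦upPow k + upSum (k + 1)⟧ :=
    le_add_of_nonneg_right (upSum_nonneg (k + 1))
  refine add_le_iff_forall_lf.2 ⟨fun i => ?_, fun _ => ?_, fun j => ?_⟩
  · refine add_lf_of_add_moveRight_le (y := star) PUnit.unit (le_iff_game_le.2 ?_)
    change (⟦A.moveLeft i + 0⟧ : Game) ≤ _
    rw [quot_add, quot_zero, add_zero]
    exact (hAL i).trans (hA.le.trans hV_le)
  · refine lf_of_lt (lt_iff_game_lt.2 ?_)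
    change (⟦A + 0⟧ : Game) < _
    rw [quot_add, quot_zero, add_zero]
    exact hA.trans_le hV_le
  · refine lf_of_lt (lt_iff_game_lt.2 ?_)
    cases j using rightMoves_add_cases with
    | inl j =>
      rw [add_moveRight_inl]
      change (⟦A + star⟧ : Game) < ⟦(star - upSum k) + (upSum k + upPow k)⟧
      simp only [quot_add, quot_sub]
      calc (⟦A⟧ : Game) + ⟦star⟧ < ⟦upPow k⟧ + ⟦star⟧ := add_lt_add_left hA _
        _ = ⟦star⟧ - ⟦upSum k⟧ + (⟦upSum k⟧ + ⟦upPow k⟧) := by abel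
    | inr j =>
      rw [add_moveRight_inr, quot_add, quot_add]
      calc (⟦A⟧ : Game) + ⟦star⟧ < ⟦upPow k⟧ + ⟦star⟧ := add_lt_add_left hA _
        _ ≤ ⟦upPow k⟧ + ⟦(upSum (k + 1)).moveRight j⟧ :=
          add_le_add_right (star_le_upSum_moveRight _ j) _

theorem nCopies_upPow_succ_lt (k n : ℕ) : (⟦nCopies n (upPow (k + 1))⟧ : Game) < ⟦upPow k⟧ := by
  induction n with
  | zero => exact upPow_pos k
  | succ n ih =>
    have h_moveLeft := quot_nCopies_moveLeft (G := upPow (k + 1)) fun _ => rfl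
    refine ⟨le_def.2 ⟨fun i => lf_of_lt (lt_iff_game_lt.2 ?_), fun _ => ?_⟩, ?_⟩
    · rw [h_moveLeft]
      change (⟦nCopies n (upPow (k + 1)) + upPow (k + 1)⟧ : Game) - _ < _
      rwa [quot_add, add_sub_cancel_right]
    · refine add_lf_of_add_moveRight_le (y := upPow (k + 1)) PUnit.unit (le_iff_game_le.2 ?_)
      change (⟦nCopies n (upPow (k + 1)) + (star - (upSum k + upPow k))⟧ : Game) ≤
        ⟦star - upSum k⟧
      simp only [quot_add, quot_sub]
      calc _ = ⟦star⟧ - ⟦upSum k⟧ + (⟦nCopies n (upPow (k + 1))⟧ - ⟦upPow k⟧) := by abel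
        _ ≤ ⟦star⟧ - ⟦upSum k⟧ := add_le_of_nonpos_right (sub_nonpos.2 ih.le)
    · refine add_lf_of_add_moveRight_le (y := upPow (k + 1)) PUnit.unit (le_iff_game_le.2 ?_)
      have h := le_iff_game_le.1 (add_star_le_upPow_add_upSum
        (fun i => (h_moveLeft n i).trans_le (sub_le_self _ (upPow_pos (k + 1)).le)) ih)
      change (⟦nCopies n (upPow (k + 1)) + (star - upSum (k + 1))⟧ : Game) ≤ _
      simp only [quot_add, quot_sub] at h ⊢
      rwa [← add_sub_assoc, sub_le_iff_le_add]

end SeqCompound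

open SeqCompound in
/-- for `k ≥ 1` and `n ≥ 0`, `n·↑^(k+1) < ↑^k`
(here `upPow j` denotes `↑^(j+1)`). -/
theorem nsmul_upPow_lt (k n : ℕ) :
    (n • (⟦upPow (k + 1)⟧ : Game)) < (⟦upPow k⟧ : Game) := by
  rw [← PGame.quot_nCopies]
  exact nCopies_upPow_succ_lt k n
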